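/- Let Q be a restriction quantal frame. The map χ : Q → Ω(C(Q)) sending a to X_a (the set of completely prime filters containing a) satisfies X_{ab} = X_a · X_b, where the right-hand side is the set {A·B : A ∈ X_a, B ∈ X_b, d(A) = r(B)}; that is, χ is a semigroup homomorphism from Q to the quantale of open subsets of the étale category C(Q). -/
import Mathlib


/-- A restriction quantal frame: a frame `Q` with a monoid multiplication
distributing over arbitrary joins (a unital quantal frame), which is an
Ehresmann semigroup whose projections are exactly the elements below the
monoid unit `1` and whose unary operations `st` (`*`) and `pl` (`⁺`) preserve
joins, such that the top element is a join of partial isometries and the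
partial isometries are closed under multiplication. -/
class RQF (Q : Type*) extends Order.Frame Q, Monoid Q where
  mul_sSup_distrib : ∀ (a : Q) (S : Set Q), a * sSup S = ⨆ b ∈ S, a * b
  sSup_mul_distrib : ∀ (a : Q) (S : Set Q), sSup S * a = ⨆ b ∈ S, b * a
  st : Q → Q
  pl : Q → Q
  st_le_one : ∀ a : Q, st a ≤ 1
  pl_le_one : ∀ a : Q, pl a ≤ 1
  proj_comm : ∀ a b : Q, a ≤ 1 → b ≤ 1 → a * b = b * a
  proj_idem : ∀ a : Q, a ≤ 1 → a * a = a
  st_proj : ∀ a : Q, a ≤ 1 → st a = a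
  pl_proj : ∀ a : Q, a ≤ 1 → pl a = a
  mul_st : ∀ a : Q, a * st a = a
  pl_mul : ∀ a : Q, pl a * a = a
  st_mul_eq : ∀ a b : Q, st (a * b) = st (st a * b)
  pl_mul_eq : ∀ a b : Q, pl (a * b) = pl (a * pl b)
  st_sSup : ∀ S : Set Q, st (sSup S) = ⨆ a ∈ S, st a
  pl_sSup : ∀ S : Set Q, pl (sSup S) = ⨆ a ∈ S, pl a
  top_join_pi : sSup {a : Q | ∀ b, b ≤ a → b = pl b * a ∧ b = a * st b} = ⊤
  pi_mul_closed : ∀ a b : Q,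
    (∀ c, c ≤ a → c = pl c * a ∧ c = a * st c) →
    (∀ c, c ≤ b → c = pl c * b ∧ c = b * st c) →
    (∀ c, c ≤ a * b → c = pl c * (a * b) ∧ c = (a * b) * st c)

namespace RQF

variable {Q : Type*} [RQF Q]

/-- `a` is a partial isometry. -/
def PI (a : Q) : Prop := ∀ b, b ≤ a → b = pl b * a ∧ b = a * st b

/-- `a` and `b` are compatible. -/
def Compat (a b : Q) : Prop := a * st b = b * st a ∧ pl b * a = pl a * b

/-- A completely prime filter in `Q`: a proper filter such that whenever a
join lies in it, one of the joinands does. -/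
def CPFilter (A : Set Q) : Prop :=
  A.Nonempty ∧
  (∀ a ∈ A, ∀ b : Q, a ≤ b → b ∈ A) ∧
  (∀ a ∈ A, ∀ b ∈ A, a ⊓ b ∈ A) ∧
  (⊥ : Q) ∉ A ∧
  ∀ S : Set Q, sSup S ∈ A → ∃ s ∈ S, s ∈ A

/-- A completely prime filter in the frame `e↓ = 1↓` of projections. -/
def CPFilterProj (F : Set Q) : Prop :=
  F.Nonempty ∧
  (∀ f ∈ F, f ≤ (1 : Q)) ∧
  (∀ f ∈ F, ∀ g : Q, g ≤ (1 : Q) → f ≤ g → g ∈ F) ∧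
  (∀ f ∈ F, ∀ g ∈ F, f ⊓ g ∈ F) ∧
  (⊥ : Q) ∉ F ∧
  ∀ S : Set Q, (∀ s ∈ S, s ≤ (1 : Q)) → sSup S ∈ F → ∃ s ∈ S, s ∈ F

/-- Upward closure in `Q`. -/
def up (F : Set Q) : Set Q := {x | ∃ f ∈ F, f ≤ x}

/-- `d(A) = (A*)↑`. -/
def dF (A : Set Q) : Set Q := {x | ∃ a ∈ A, st a ≤ x}

/-- `r(A) = (A⁺)↑`. -/
def rF (A : Set Q) : Set Q := {x | ∃ a ∈ A, pl a ≤ x}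

/-- `A · B = (AB)↑`. -/
def prodF (A B : Set Q) : Set Q := {x | ∃ a ∈ A, ∃ b ∈ B, a * b ≤ x}

end RQF
section Helpers
open RQF
variable {Q : Type*} [RQF Q]

lemma mul_sup_left (c x y : Q) : c * (x ⊔ y) = c * x ⊔ c * y := by
  have hd := RQF.mul_sSup_distrib c {x, y}
  simpa [iSup_or, iSup_sup_eq] using hd

lemma sup_mul_right (c x y : Q) : (x ⊔ y) * c = x * c ⊔ y * c := by
  have hd := RQF.sSup_mul_distrib c {x, y}
  simpa [iSup_or, iSup_sup_eq] using hd

lemma mul_mono_left {x y : Q} (c : Q) (h : x ≤ y) : c * x ≤ c * y := by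
  have : c * y = c * x ⊔ c * y := by rw [← mul_sup_left, sup_eq_right.mpr h]
  rw [this]; exact le_sup_left

lemma mul_mono_right {x y : Q} (c : Q) (h : x ≤ y) : x * c ≤ y * c := by
  have : y * c = x * c ⊔ y * c := by rw [← sup_mul_right, sup_eq_right.mpr h]
  rw [this]; exact le_sup_left

lemma mul_bot' (a : Q) : a * (⊥ : Q) = ⊥ := by
  have := RQF.mul_sSup_distrib a (∅ : Set Q); simpa [iSup_or, iSup_sup_eq] using this

lemma bot_mul' (a : Q) : (⊥ : Q) * a = ⊥ := by
  have := RQF.sSup_mul_distrib a (∅ : Set Q); simpa [iSup_or, iSup_sup_eq] using this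

lemma st_bot : st (⊥ : Q) = ⊥ := by
  have := RQF.st_sSup (∅ : Set Q); simpa [iSup_or, iSup_sup_eq] using this

lemma pl_bot : pl (⊥ : Q) = ⊥ := by
  have := RQF.pl_sSup (∅ : Set Q); simpa [iSup_or, iSup_sup_eq] using this

lemma st_sup (x y : Q) : st (x ⊔ y) = st x ⊔ st y := by
  have := RQF.st_sSup {x, y}; simpa [iSup_or, iSup_sup_eq] using this

lemma pl_sup (x y : Q) : pl (x ⊔ y) = pl x ⊔ pl y := by
  have := RQF.pl_sSup {x, y}; simpa [iSup_or, iSup_sup_eq] using this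

lemma st_mono {x y : Q} (h : x ≤ y) : st x ≤ st y := by
  have : st y = st x ⊔ st y := by rw [← st_sup, sup_eq_right.mpr h]
  rw [this]; exact le_sup_left

lemma pl_mono {x y : Q} (h : x ≤ y) : pl x ≤ pl y := by
  have : pl y = pl x ⊔ pl y := by rw [← pl_sup, sup_eq_right.mpr h]
  rw [this]; exact le_sup_left

end Helpers
section Helpers2
open RQF
variable {Q : Type*} [RQF Q]

lemma st_st (a : Q) : st (st a : Q) = st a := RQF.st_proj _ (RQF.st_le_one a)
lemma pl_pl (a : Q) : pl (pl a : Q) = pl a := RQF.pl_proj _ (RQF.pl_le_one a)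

lemma proj_mul_le_one {e f : Q} (he : e ≤ 1) (hf : f ≤ 1) : e * f ≤ 1 := by
  calc e * f ≤ 1 * f := mul_mono_right f he
  _ = f := one_mul f
  _ ≤ 1 := hf

lemma proj_absorb {e f : Q} (he : e ≤ 1) (hf : f ≤ 1) (hef : e ≤ f) : f * e = e := by
  apply le_antisymm
  · calc f * e ≤ 1 * e := mul_mono_right e hf
    _ = e := one_mul e
  · calc e = e * e := (RQF.proj_idem e he).symm
    _ = e * e := rfl
    _ ≤ e * f := mul_mono_left e hef
    _ = f * e := RQF.proj_comm e f he hf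

/-- If `pl t ≤ e ≤ 1` then `e * t = t`. -/
lemma absorb_left {e t : Q} (he : e ≤ 1) (h : pl t ≤ e) : e * t = t := by
  apply le_antisymm
  · calc e * t ≤ 1 * t := mul_mono_right t he
    _ = t := one_mul t
  · calc t = pl t * t := (RQF.pl_mul t).symm
    _ ≤ e * t := mul_mono_right t h

/-- If `st t ≤ e ≤ 1` then `t * e = t`. -/
lemma absorb_right {e t : Q} (he : e ≤ 1) (h : st t ≤ e) : t * e = t := by
  apply le_antisymm
  · calc t * e ≤ t * 1 := mul_mono_left t he
    _ = t := mul_one t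
  · calc t = t * st t := (RQF.mul_st t).symm
    _ ≤ t * e := mul_mono_left t h

lemma st_mul_proj (a : Q) {e : Q} (he : e ≤ 1) : st (a * e) = st a * e := by
  rw [RQF.st_mul_eq, RQF.st_proj _ (proj_mul_le_one (RQF.st_le_one a) he)]

lemma pl_proj_mul (a : Q) {e : Q} (he : e ≤ 1) : pl (e * a) = e * pl a := by
  rw [RQF.pl_mul_eq, RQF.pl_proj _ (proj_mul_le_one he (RQF.pl_le_one a))]

lemma pl_mul_le (a b : Q) : pl (a * b) ≤ pl a := by
  rw [RQF.pl_mul_eq]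
  calc pl (a * pl b) ≤ pl (a * 1) := pl_mono (mul_mono_left a (RQF.pl_le_one b))
  _ = pl a := by rw [mul_one]

lemma st_mul_le (a b : Q) : st (a * b) ≤ st b := by
  rw [RQF.st_mul_eq]
  calc st (st a * b) ≤ st (1 * b) := st_mono (mul_mono_right b (RQF.st_le_one a))
  _ = st b := by rw [one_mul]

lemma RQF.PI.mono {s x : Q} (hs : PI s) (hx : x ≤ s) : PI x := by
  intro c hc
  obtain ⟨h1, h2⟩ := hs c (hc.trans hx)
  constructor
  · apply le_antisymm
    · calc c = pl c * c := (RQF.pl_mul c).symm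
      _ ≤ pl c * x := mul_mono_left _ hc
    · calc pl c * x ≤ pl c * s := mul_mono_left _ hx
      _ = c := h1.symm
  · apply le_antisymm
    · calc c = c * st c := (RQF.mul_st c).symm
      _ ≤ x * st c := mul_mono_right _ hc
    · calc x * st c ≤ s * st c := mul_mono_right _ hx
      _ = c := h2.symm

lemma RQF.PI.mul {s t : Q} (hs : PI s) (ht : PI t) : PI (s * t) :=
  RQF.pi_mul_closed s t hs ht

/-- An element below a PI `t` equals `t * st` of itself. -/
lemma RQF.PI.eq_mul_st {t c : Q} (ht : PI t) (hc : c ≤ t) : c = t * st c := (ht c hc).2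
lemma RQF.PI.eq_pl_mul {t c : Q} (ht : PI t) (hc : c ≤ t) : c = pl c * t := (ht c hc).1

end Helpers2
section Helpers3
open RQF
variable {Q : Type*} [RQF Q]

lemma RQF.CPFilter.upc {A : Set Q} (h : CPFilter A) {x y : Q} (hx : x ∈ A) (hxy : x ≤ y) : y ∈ A :=
  h.2.1 x hx y hxy

lemma RQF.CPFilter.meet {A : Set Q} (h : CPFilter A) {x y : Q} (hx : x ∈ A) (hy : y ∈ A) :
    x ⊓ y ∈ A := h.2.2.1 x hx y hy

lemma RQF.CPFilter.nbot {A : Set Q} (h : CPFilter A) : (⊥ : Q) ∉ A := h.2.2.2.1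

lemma RQF.CPFilter.prime {A : Set Q} (h : CPFilter A) {S : Set Q} (hS : sSup S ∈ A) :
    ∃ s ∈ S, s ∈ A := h.2.2.2.2 S hS

lemma RQF.CPFilter.top_mem {A : Set Q} (h : CPFilter A) : (⊤ : Q) ∈ A := by
  obtain ⟨x, hx⟩ := h.1; exact h.upc hx le_top

/-- primeness over an image set -/
lemma RQF.CPFilter.prime_image {A : Set Q} (h : CPFilter A) {S : Set Q} {f : Q → Q}
    (hS : (⨆ w ∈ S, f w) ∈ A) : ∃ w ∈ S, f w ∈ A := by
  have : sSup (f '' S) ∈ A := by rwa [sSup_image]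
  obtain ⟨y, hy, hyA⟩ := h.prime this
  obtain ⟨w, hw, rfl⟩ := hy
  exact ⟨w, hw, hyA⟩

/-- every member of a CP filter has a partial isometry of the filter below it -/
lemma RQF.CPFilter.exists_pi {A : Set Q} (h : CPFilter A) {x : Q} (hx : x ∈ A) :
    ∃ s, PI s ∧ s ∈ A ∧ s ≤ x := by
  have htop : sSup {a : Q | PI a} ∈ A := by
    rw [show {a : Q | PI a} = {a : Q | ∀ b, b ≤ a → b = pl b * a ∧ b = a * st b} from rfl,
      RQF.top_join_pi]
    exact h.top_mem
  obtain ⟨p, hp, hpA⟩ := h.prime htop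
  refine ⟨x ⊓ p, PI.mono hp inf_le_right, h.meet hx hpA, inf_le_left⟩

/-- alignment: matching partial isometries in composable filters -/
lemma align {A B : Set Q} (hA : CPFilter A) (hB : CPFilter B) (hdr : dF A = rF B)
    {α β : Q} (hα : α ∈ A) (hβ : β ∈ B) :
    ∃ s t : Q, PI s ∧ PI t ∧ s ∈ A ∧ t ∈ B ∧ s ≤ α ∧ t ≤ β ∧ pl t ≤ st s := by
  obtain ⟨s, hsPI, hsA, hsα⟩ := hA.exists_pi hα
  have hst : st s ∈ dF A := ⟨s, hsA, le_rfl⟩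
  rw [hdr] at hst
  obtain ⟨β', hβ', hplβ'⟩ := hst
  obtain ⟨t, htPI, htB, htle⟩ := hB.exists_pi (hB.meet hβ hβ')
  refine ⟨s, t, hsPI, htPI, hsA, htB, hsα, htle.trans inf_le_left, ?_⟩
  exact (pl_mono (htle.trans inf_le_right)).trans hplβ'

/-- key primeness of the product of composable CP filters -/
lemma prodF_prime {A B : Set Q} (hA : CPFilter A) (hB : CPFilter B) (hdr : dF A = rF B)
    {S : Set Q} (hS : sSup S ∈ prodF A B) : ∃ u ∈ S, u ∈ prodF A B := by
  obtain ⟨α, hα, β, hβ, hαβ⟩ := hS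
  obtain ⟨s, t, hsPI, htPI, hsA, htB, hsα, htβ, hcomp⟩ := align hA hB hdr hα hβ
  have hstPI : PI (s * t) := hsPI.mul htPI
  have hstle : s * t ≤ sSup S :=
    le_trans (le_trans (mul_mono_right t hsα) (mul_mono_left α htβ)) hαβ
  -- s * t = ⨆ u ∈ S, (s*t) ⊓ u
  have hdec : s * t = ⨆ u ∈ S, (s * t) ⊓ u := by
    conv_lhs => rw [← inf_eq_left.mpr hstle, inf_sSup_eq]
  -- st s * t = t
  have hsst : st s * t = t := absorb_left (RQF.st_le_one s) hcomp
  have hstst : st (s * t) = st t := by rw [RQF.st_mul_eq, hsst]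
  -- st t = ⨆ u ∈ S, st ((s*t) ⊓ u)
  have h2 : st t = ⨆ u ∈ S, st ((s * t) ⊓ u) := by
    rw [← hstst]
    conv_lhs => rw [hdec]
    rw [show (⨆ u ∈ S, (s * t) ⊓ u) = sSup ((fun u => (s*t) ⊓ u) '' S) from (sSup_image).symm,
      RQF.st_sSup]
    rw [iSup_image]
  -- t = ⨆ u ∈ S, t * st ((s*t) ⊓ u)
  have h3 : t = ⨆ u ∈ S, t * st ((s * t) ⊓ u) := by
    conv_lhs => rw [← RQF.mul_st t, h2]
    rw [show (⨆ u ∈ S, st ((s*t) ⊓ u)) = sSup ((fun u => st ((s*t) ⊓ u)) '' S) from (sSup_image).symm,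
      RQF.mul_sSup_distrib, iSup_image]
  have ht2 : (⨆ u ∈ S, t * st ((s * t) ⊓ u)) ∈ B := h3 ▸ htB
  obtain ⟨u, huS, huB⟩ := hB.prime_image ht2
  refine ⟨u, huS, s, hsA, t * st ((s * t) ⊓ u), huB, ?_⟩
  calc s * (t * st ((s * t) ⊓ u)) = (s * t) * st ((s * t) ⊓ u) := by rw [mul_assoc]
  _ = (s * t) ⊓ u := (hstPI.eq_mul_st inf_le_left).symm
  _ ≤ u := inf_le_right

lemma prodF_cpfilter {A B : Set Q} (hA : CPFilter A) (hB : CPFilter B) (hdr : dF A = rF B) :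
    CPFilter (prodF A B) := by
  obtain ⟨α, hα⟩ := hA.1
  obtain ⟨β, hβ⟩ := hB.1
  refine ⟨⟨α * β, α, hα, β, hβ, le_rfl⟩, ?_, ?_, ?_, fun S hS => prodF_prime hA hB hdr hS⟩
  · rintro x ⟨a, ha, b, hb, hab⟩ y hxy
    exact ⟨a, ha, b, hb, hab.trans hxy⟩
  · rintro x ⟨a, ha, b, hb, hab⟩ y ⟨a', ha', b', hb', hab'⟩
    refine ⟨a ⊓ a', hA.meet ha ha', b ⊓ b', hB.meet hb hb', le_inf ?_ ?_⟩
    · exact le_trans (le_trans (mul_mono_right _ inf_le_left) (mul_mono_left _ inf_le_left)) hab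
    · exact le_trans (le_trans (mul_mono_right _ inf_le_right) (mul_mono_left _ inf_le_right)) hab'
  · intro hbot
    have : sSup (∅ : Set Q) ∈ prodF A B := by rwa [sSup_empty]
    obtain ⟨u, hu, -⟩ := prodF_prime hA hB hdr this
    exact hu

end Helpers3
section Helpers4
open RQF
variable {Q : Type*} [RQF Q]

/-- From `a*b ∈ F` extract aligned partial isometries below `a` and `b`. -/
lemma exists_pi_pair {F : Set Q} (hF : CPFilter F) {a b : Q} (hab : a * b ∈ F) :
    ∃ s t : Q, PI s ∧ PI t ∧ s ≤ a ∧ t ≤ b ∧ pl t ≤ st s ∧ s * t ∈ F := by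
  have hPItop : sSup {p : Q | PI p} = ⊤ := RQF.top_join_pi
  have hadec : ∀ c : Q, c = ⨆ p ∈ {p : Q | PI p}, c ⊓ p := by
    intro c
    conv_lhs => rw [← inf_top_eq c, ← hPItop, inf_sSup_eq]
  -- a * b = ⨆ p ∈ PI, (a ⊓ p) * b
  have h1 : (⨆ p ∈ {p : Q | PI p}, (a ⊓ p) * b) ∈ F := by
    have : a * b = ⨆ p ∈ {p : Q | PI p}, (a ⊓ p) * b := by
      conv_lhs => rw [hadec a,
        show (⨆ p ∈ {p : Q | PI p}, a ⊓ p) = sSup ((fun p => a ⊓ p) '' {p : Q | PI p}) from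
          (sSup_image).symm,
        RQF.sSup_mul_distrib, iSup_image]
    rwa [← this]
  obtain ⟨p, hpPI, hpF⟩ := hF.prime_image h1
  set s := a ⊓ p with hs
  have hsPI : PI s := RQF.PI.mono hpPI inf_le_right
  have h2 : (⨆ q ∈ {p : Q | PI p}, s * (b ⊓ q)) ∈ F := by
    have : s * b = ⨆ q ∈ {p : Q | PI p}, s * (b ⊓ q) := by
      conv_lhs => rw [hadec b,
        show (⨆ q ∈ {p : Q | PI p}, b ⊓ q) = sSup ((fun q => b ⊓ q) '' {p : Q | PI p}) from
          (sSup_image).symm,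
        RQF.mul_sSup_distrib, iSup_image]
    rwa [← this]
  obtain ⟨q, hqPI, hqF⟩ := hF.prime_image h2
  set t₁ := b ⊓ q with ht₁
  have ht₁PI : PI t₁ := RQF.PI.mono hqPI inf_le_right
  refine ⟨s, st s * t₁, hsPI, ?_, inf_le_left, ?_, ?_, ?_⟩
  · exact RQF.PI.mono ht₁PI (by
      calc st s * t₁ ≤ 1 * t₁ := mul_mono_right _ (RQF.st_le_one s)
      _ = t₁ := one_mul t₁)
  · calc st s * t₁ ≤ 1 * t₁ := mul_mono_right _ (RQF.st_le_one s)
    _ = t₁ := one_mul t₁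
    _ ≤ b := inf_le_left
  · rw [pl_proj_mul _ (RQF.st_le_one s)]
    calc st s * pl t₁ ≤ st s * 1 := mul_mono_left _ (RQF.pl_le_one t₁)
    _ = st s := mul_one _
  · have : s * (st s * t₁) = s * t₁ := by rw [← mul_assoc, RQF.mul_st]
    rwa [this]

end Helpers4
section Helpers5
open RQF
variable {Q : Type*} [RQF Q]

lemma decompose {F : Set Q} (hF : CPFilter F) {a b : Q} (hab : a * b ∈ F) :
    ∃ A, (CPFilter A ∧ a ∈ A) ∧ ∃ B, (CPFilter B ∧ b ∈ B) ∧
      dF A = rF B ∧ F = prodF A B := by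
  obtain ⟨s, t, hsPI, htPI, hsa, htb, hcomp, hstF⟩ := exists_pi_pair hF hab
  have hstPI : PI (s * t) := hsPI.mul htPI
  set B : Set Q := {w | ∃ u ∈ F, t * st u ≤ w} with hBdef
  set A : Set Q := {x | ∃ u ∈ F, s * pl (t * st u) ≤ x} with hAdef
  -- generator facts
  have genB_le_t : ∀ u : Q, t * st u ≤ t := fun u => by
    calc t * st u ≤ t * 1 := mul_mono_left _ (RQF.st_le_one u)
    _ = t := mul_one t
  have genA_le_s : ∀ u : Q, s * pl (t * st u) ≤ s := fun u => by
    calc s * pl (t * st u) ≤ s * 1 := mul_mono_left _ (RQF.pl_le_one _)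
    _ = s := mul_one s
  have genB_mono : ∀ u u' : Q, u ≤ u' → t * st u ≤ t * st u' := fun u u' h =>
    mul_mono_left _ (st_mono h)
  have genA_mono : ∀ u u' : Q, u ≤ u' → s * pl (t * st u) ≤ s * pl (t * st u') :=
    fun u u' h => mul_mono_left _ (pl_mono (mul_mono_left _ (st_mono h)))
  -- (k2) every v ≤ s*t factors
  have k2 : ∀ v : Q, v ≤ s * t → v = s * (t * st v) := fun v hv => by
    rw [← mul_assoc]; exact hstPI.eq_mul_st hv
  -- (k4) product of generators
  have k4 : ∀ u : Q, (s * pl (t * st u)) * (t * st u) = s * (t * st u) := fun u => by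
    rw [mul_assoc, RQF.pl_mul]
  -- (k5) st of A-generator equals pl of B-generator
  have k5 : ∀ u : Q, st (s * pl (t * st u)) = pl (t * st u) := fun u => by
    rw [st_mul_proj _ (RQF.pl_le_one _)]
    exact proj_absorb (RQF.pl_le_one _) (RQF.st_le_one s)
      ((pl_mul_le t (st u)).trans hcomp)
  have haA : a ∈ A := ⟨s * t, hstF, (genA_le_s _).trans hsa⟩
  have hbB : b ∈ B := ⟨s * t, hstF, (genB_le_t _).trans htb⟩
  -- B is a CP filter
  have hB : CPFilter B := by
    refine ⟨⟨b, hbB⟩, ?_, ?_, ?_, ?_⟩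
    · rintro w ⟨u, hu, hle⟩ w' hww'
      exact ⟨u, hu, hle.trans hww'⟩
    · rintro w ⟨u, hu, hle⟩ w' ⟨u', hu', hle'⟩
      exact ⟨u ⊓ u', hF.meet hu hu',
        le_inf ((genB_mono _ _ inf_le_left).trans hle)
          ((genB_mono _ _ inf_le_right).trans hle')⟩
    · rintro ⟨u, hu, hle⟩
      have hu₀ : u ⊓ (s * t) ∈ F := hF.meet hu hstF
      have : u ⊓ (s * t) ≤ ⊥ := by
        calc u ⊓ (s * t) = s * (t * st (u ⊓ (s * t))) := k2 _ inf_le_right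
        _ ≤ s * (t * st u) := mul_mono_left _ (genB_mono _ _ inf_le_left)
        _ ≤ s * ⊥ := mul_mono_left _ hle
        _ = ⊥ := mul_bot' s
      exact hF.nbot (le_bot_iff.mp this ▸ hu₀)
    · rintro S ⟨u, hu, hle⟩
      set u₀ := u ⊓ (s * t) with hu₀def
      have hu₀ : u₀ ∈ F := hF.meet hu hstF
      have h4 : u₀ ≤ ⨆ w ∈ S, s * (t ⊓ w) := by
        calc u₀ = s * (t * st u₀) := k2 _ inf_le_right
        _ ≤ s * (t ⊓ sSup S) := mul_mono_left _ (le_inf (genB_le_t _)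
            ((genB_mono _ _ inf_le_left).trans hle))
        _ = s * (⨆ w ∈ S, t ⊓ w) := by rw [inf_sSup_eq]
        _ = ⨆ w ∈ S, s * (t ⊓ w) := by
            rw [show (⨆ w ∈ S, t ⊓ w) = sSup ((fun w => t ⊓ w) '' S) from (sSup_image).symm,
              RQF.mul_sSup_distrib, iSup_image]
      obtain ⟨w, hwS, hwF⟩ := hF.prime_image (hF.upc hu₀ h4)
      set u' := (s * (t ⊓ w)) ⊓ (s * t) with hu'def
      have hu' : u' ∈ F := hF.meet hwF hstF
      refine ⟨w, hwS, u', hu', ?_⟩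
      have hst' : st u' ≤ st (t ⊓ w) :=
        (st_mono inf_le_left).trans (st_mul_le s (t ⊓ w))
      calc t * st u' ≤ t * st (t ⊓ w) := mul_mono_left _ hst'
      _ = t ⊓ w := (htPI.eq_mul_st inf_le_left).symm
      _ ≤ w := inf_le_right
  -- A is a CP filter
  have hA : CPFilter A := by
    refine ⟨⟨a, haA⟩, ?_, ?_, ?_, ?_⟩
    · rintro x ⟨u, hu, hle⟩ x' hxx'
      exact ⟨u, hu, hle.trans hxx'⟩
    · rintro x ⟨u, hu, hle⟩ x' ⟨u', hu', hle'⟩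
      exact ⟨u ⊓ u', hF.meet hu hu',
        le_inf ((genA_mono _ _ inf_le_left).trans hle)
          ((genA_mono _ _ inf_le_right).trans hle')⟩
    · rintro ⟨u, hu, hle⟩
      have hu₀ : u ⊓ (s * t) ∈ F := hF.meet hu hstF
      have : u ⊓ (s * t) ≤ ⊥ := by
        calc u ⊓ (s * t) = s * (t * st (u ⊓ (s * t))) := k2 _ inf_le_right
        _ = (s * pl (t * st (u ⊓ (s * t)))) * (t * st (u ⊓ (s * t))) := (k4 _).symm
        _ ≤ (s * pl (t * st u)) * (t * st (u ⊓ (s * t))) :=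
            mul_mono_right _ (genA_mono _ _ inf_le_left)
        _ ≤ ⊥ * (t * st (u ⊓ (s * t))) := mul_mono_right _ hle
        _ = ⊥ := bot_mul' _
      exact hF.nbot (le_bot_iff.mp this ▸ hu₀)
    · rintro S ⟨u, hu, hle⟩
      set u₀ := u ⊓ (s * t) with hu₀def
      have hu₀ : u₀ ∈ F := hF.meet hu hstF
      have hα₀ : s * pl (t * st u₀) ≤ ⨆ w ∈ S, s ⊓ w := by
        have h1 : s * pl (t * st u₀) ≤ s ⊓ sSup S :=
          le_inf (genA_le_s _) ((genA_mono _ _ inf_le_left).trans hle)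
        rw [inf_sSup_eq] at h1; exact h1
      have h4 : u₀ ≤ ⨆ w ∈ S, (s ⊓ w) * (t * st u₀) := by
        calc u₀ = s * (t * st u₀) := k2 _ inf_le_right
        _ = (s * pl (t * st u₀)) * (t * st u₀) := (k4 _).symm
        _ ≤ (⨆ w ∈ S, s ⊓ w) * (t * st u₀) := mul_mono_right _ hα₀
        _ = ⨆ w ∈ S, (s ⊓ w) * (t * st u₀) := by
            rw [show (⨆ w ∈ S, s ⊓ w) = sSup ((fun w => s ⊓ w) '' S) from (sSup_image).symm,
              RQF.sSup_mul_distrib, iSup_image]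
      obtain ⟨w, hwS, hwF⟩ := hF.prime_image (hF.upc hu₀ h4)
      set u' := ((s ⊓ w) * (t * st u₀)) ⊓ (s * t) with hu'def
      have hu' : u' ∈ F := hF.meet hwF hstF
      refine ⟨w, hwS, u', hu', ?_⟩
      have hply : pl (s * pl (t * st u')) = pl u' := by
        conv_rhs => rw [k2 u' inf_le_right]
        rw [← RQF.pl_mul_eq]
      have hplu' : pl u' ≤ pl (s ⊓ w) :=
        (pl_mono inf_le_left).trans (pl_mul_le _ _)
      calc s * pl (t * st u')
          = pl (s * pl (t * st u')) * s := hsPI.eq_pl_mul (genA_le_s u')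
      _ = pl u' * s := by rw [hply]
      _ ≤ pl (s ⊓ w) * s := mul_mono_right _ hplu'
      _ = s ⊓ w := (hsPI.eq_pl_mul inf_le_left).symm
      _ ≤ w := inf_le_right
  refine ⟨A, ⟨hA, haA⟩, B, ⟨hB, hbB⟩, ?_, ?_⟩
  · -- dF A = rF B
    ext x
    constructor
    · rintro ⟨α, ⟨u, hu, hgen⟩, hstα⟩
      exact ⟨t * st u, ⟨u, hu, le_rfl⟩, by
        calc pl (t * st u) = st (s * pl (t * st u)) := (k5 u).symm
        _ ≤ st α := st_mono hgen
        _ ≤ x := hstα⟩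
    · rintro ⟨β, ⟨u, hu, hgen⟩, hplβ⟩
      exact ⟨s * pl (t * st u), ⟨u, hu, le_rfl⟩, by
        calc st (s * pl (t * st u)) = pl (t * st u) := k5 u
        _ ≤ pl β := pl_mono hgen
        _ ≤ x := hplβ⟩
  · -- F = prodF A B
    ext x
    constructor
    · intro hx
      have hu₀ : x ⊓ (s * t) ∈ F := hF.meet hx hstF
      refine ⟨s * pl (t * st (x ⊓ (s * t))), ⟨_, hu₀, le_rfl⟩,
        t * st (x ⊓ (s * t)), ⟨_, hu₀, le_rfl⟩, ?_⟩
      calc (s * pl (t * st (x ⊓ (s * t)))) * (t * st (x ⊓ (s * t)))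
          = s * (t * st (x ⊓ (s * t))) := k4 _
      _ = x ⊓ (s * t) := (k2 _ inf_le_right).symm
      _ ≤ x := inf_le_left
    · rintro ⟨α, ⟨u, hu, hgα⟩, β, ⟨u', hu', hgβ⟩, hαβ⟩
      set u₀ := (u ⊓ u') ⊓ (s * t) with hu₀def
      have hu₀ : u₀ ∈ F := hF.meet (hF.meet hu hu') hstF
      refine hF.upc hu₀ ?_
      calc u₀ = s * (t * st u₀) := k2 _ inf_le_right
      _ = (s * pl (t * st u₀)) * (t * st u₀) := (k4 _).symm
      _ ≤ α * (t * st u₀) := mul_mono_right _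
          ((genA_mono _ _ (inf_le_left.trans inf_le_left)).trans hgα)
      _ ≤ α * β := mul_mono_left _
          ((genB_mono _ _ (inf_le_left.trans inf_le_right)).trans hgβ)
      _ ≤ x := hαβ

end Helpers5
open RQF in
/-- `χ : a ↦ X_a` is a semigroup homomorphism: the set of
completely prime filters containing `ab` is exactly the pointwise product of
the sets of those containing `a` and those containing `b`. -/
theorem chi_semigroup_hom {Q : Type*} [RQF Q] (a b : Q) :
    {F : Set Q | CPFilter F ∧ a * b ∈ F} =
      {F : Set Q | ∃ A, (CPFilter A ∧ a ∈ A) ∧ ∃ B, (CPFilter B ∧ b ∈ B) ∧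
        dF A = rF B ∧ F = prodF A B} := by
  ext F
  simp only [Set.mem_setOf_eq]
  constructor
  · rintro ⟨hF, hab⟩
    exact decompose hF hab
  · rintro ⟨A, ⟨hA, haA⟩, B, ⟨hB, hbB⟩, hdr, rfl⟩
    exact ⟨prodF_cpfilter hA hB hdr, a, haA, b, hbB, le_rfl⟩
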